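/- Let H be an r×k real matrix and A a symmetric positive definite k×k real matrix. Then the spectral norm of the Moore–Penrose pseudoinverse of H A Hᵀ satisfies |||(H A Hᵀ)⁺||| ≤ |||H⁺|||² · |||A⁻¹|||. -/

import Mathlib

open MeasureTheory Matrix

/-- The spectral (operator) norm of a real matrix, viewed as a linear map
between Euclidean spaces. -/
noncomputable def specNorm {m n : ℕ} (A : Matrix (Fin m) (Fin n) ℝ) : ℝ :=
  ‖LinearMap.toContinuousLinearMap (Matrix.toEuclideanLin A)‖

/-- `P` is the Moore–Penrose pseudoinverse of `B` (the four Penrose conditions). -/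
def IsMoorePenrose {r k : ℕ} (B : Matrix (Fin r) (Fin k) ℝ)
    (P : Matrix (Fin k) (Fin r) ℝ) : Prop :=
  B * P * B = B ∧ P * B * P = P ∧ (B * P)ᵀ = B * P ∧ (P * B)ᵀ = P * B

open scoped Matrix.Norms.L2Operator

lemma mp_unique {r k : ℕ} {B : Matrix (Fin r) (Fin k) ℝ} {P Q : Matrix (Fin k) (Fin r) ℝ}
    (hP : IsMoorePenrose B P) (hQ : IsMoorePenrose B Q) : P = Q := by
  obtain ⟨h1, h2, h3, h4⟩ := hP
  obtain ⟨g1, g2, g3, g4⟩ := hQ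
  have hBP : B * P = B * Q := by
    have e2 : (B * P) * (B * Q) = B * Q := by rw [← Matrix.mul_assoc, h1]
    calc B * P = (B * Q) * (B * P) := by rw [← Matrix.mul_assoc, g1]
      _ = (B * Q)ᵀ * (B * P)ᵀ := by rw [g3, h3]
      _ = ((B * P) * (B * Q))ᵀ := (Matrix.transpose_mul _ _).symm
      _ = (B * Q)ᵀ := by rw [e2]
      _ = B * Q := g3
  have hPB : P * B = Q * B := by
    have e2 : (Q * B) * (P * B) = Q * B := by
      rw [Matrix.mul_assoc, ← Matrix.mul_assoc B P B, h1]
    calc P * B = (P * B) * (Q * B) := by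
          rw [Matrix.mul_assoc, ← Matrix.mul_assoc B Q B, g1]
      _ = (P * B)ᵀ * (Q * B)ᵀ := by rw [h4, g4]
      _ = ((Q * B) * (P * B))ᵀ := (Matrix.transpose_mul _ _).symm
      _ = (Q * B)ᵀ := by rw [e2]
      _ = Q * B := g4
  calc P = P * B * P := h2.symm
    _ = (Q * B) * P := by rw [hPB]
    _ = Q * (B * P) := Matrix.mul_assoc _ _ _
    _ = Q * (B * Q) := by rw [hBP]
    _ = Q * B * Q := (Matrix.mul_assoc _ _ _).symm
    _ = Q := g2

lemma mp_transpose_of_symm {n : ℕ} {B P : Matrix (Fin n) (Fin n) ℝ}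
    (hB : Bᵀ = B) (h : IsMoorePenrose B P) : IsMoorePenrose B Pᵀ := by
  obtain ⟨h1, h2, h3, h4⟩ := h
  refine ⟨?_, ?_, ?_, ?_⟩
  · have e : (B * Pᵀ * B)ᵀ = B := by
      simp only [Matrix.transpose_mul, Matrix.transpose_transpose, hB, ← Matrix.mul_assoc, h1]
    calc B * Pᵀ * B = ((B * Pᵀ * B)ᵀ)ᵀ := (Matrix.transpose_transpose _).symm
      _ = Bᵀ := by rw [e]
      _ = B := hB
  · have e : (Pᵀ * B * Pᵀ)ᵀ = P := by
      simp only [Matrix.transpose_mul, Matrix.transpose_transpose, hB, ← Matrix.mul_assoc, h2]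
    calc Pᵀ * B * Pᵀ = ((Pᵀ * B * Pᵀ)ᵀ)ᵀ := (Matrix.transpose_transpose _).symm
      _ = Pᵀ := by rw [e]
  · calc (B * Pᵀ)ᵀ = P * Bᵀ := by rw [Matrix.transpose_mul, Matrix.transpose_transpose]
      _ = P * B := by rw [hB]
      _ = (P * B)ᵀ := h4.symm
      _ = Bᵀ * Pᵀ := Matrix.transpose_mul _ _
      _ = B * Pᵀ := by rw [hB]
  · calc (Pᵀ * B)ᵀ = Bᵀ * P := by rw [Matrix.transpose_mul, Matrix.transpose_transpose]
      _ = B * P := by rw [hB]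
      _ = (B * P)ᵀ := h3.symm
      _ = Pᵀ * Bᵀ := Matrix.transpose_mul _ _
      _ = Pᵀ * B := by rw [hB]

lemma dot_eq_inner {k : ℕ} (u v : Fin k → ℝ) :
    u ⬝ᵥ v = inner ℝ ((WithLp.equiv 2 _).symm u : EuclideanSpace ℝ (Fin k))
      ((WithLp.equiv 2 _).symm v) := by
  simp [PiLp.inner_apply, dotProduct, mul_comm]

lemma norm_le_inv_of_CAC {k : ℕ} {A C : Matrix (Fin k) (Fin k) ℝ}
    (hA : A.PosDef) (hCT : Cᵀ = C) (hCAC : C * A * C = C) : ‖C‖ ≤ ‖A⁻¹‖ := by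
  rw [Matrix.l2_opNorm_def]
  refine ContinuousLinearMap.opNorm_le_bound _ (norm_nonneg _) fun x => ?_
  set x0 : Fin k → ℝ := WithLp.equiv 2 _ x with hx0
  set E : (Fin k → ℝ) → EuclideanSpace ℝ (Fin k) := ⇑(WithLp.equiv 2 (Fin k → ℝ)).symm with hE
  have hfx : (Matrix.toEuclideanLin.trans LinearMap.toContinuousLinearMap C) x
      = E (C *ᵥ x0) := rfl
  rw [hfx]
  set y : Fin k → ℝ := C *ᵥ x0 with hy
  set z : Fin k → ℝ := A⁻¹ *ᵥ y with hz
  have hAT : Aᵀ = A := by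
    ext i j
    rw [Matrix.transpose_apply]
    conv_lhs => rw [← hA.1]
    simp [Matrix.conjTranspose_apply]
  have hAA : A * A⁻¹ = 1 := Matrix.mul_nonsing_inv A hA.det_pos.ne'.isUnit
  have hAz : A *ᵥ z = y := by rw [hz, Matrix.mulVec_mulVec, hAA, Matrix.one_mulVec]
  have habs : ∀ u v : Fin k → ℝ, u ⬝ᵥ v ≤ ‖E u‖ * ‖E v‖ := fun u v => by
    rw [dot_eq_inner]; exact real_inner_le_norm _ _
  set a : ℝ := z ⬝ᵥ (A *ᵥ z) with ha
  set c : ℝ := y ⬝ᵥ (A *ᵥ y) with hc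
  have hzAy : z ⬝ᵥ (A *ᵥ y) = y ⬝ᵥ y := by
    rw [Matrix.dotProduct_mulVec, ← Matrix.mulVec_transpose, hAT, hAz]
  have hyAz : y ⬝ᵥ (A *ᵥ z) = y ⬝ᵥ y := by rw [hAz]
  have hquad : ∀ t : ℝ, 0 ≤ a * (t * t) + (2 * (y ⬝ᵥ y)) * t + c := by
    intro t
    have h0 : 0 ≤ (y + t • z) ⬝ᵥ (A *ᵥ (y + t • z)) := by
      simpa using hA.posSemidef.dotProduct_mulVec_nonneg (y + t • z)
    have hexp : (y + t • z) ⬝ᵥ (A *ᵥ (y + t • z))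
        = a * (t * t) + (2 * (y ⬝ᵥ y)) * t + c := by
      simp only [Matrix.mulVec_add, Matrix.mulVec_smul, add_dotProduct,
        smul_dotProduct, dotProduct_add, dotProduct_smul, smul_eq_mul]
      rw [hzAy, hyAz]; ring
    linarith [hexp ▸ h0]
  have hdisc : (2 * (y ⬝ᵥ y)) ^ 2 - 4 * a * c ≤ 0 := discrim_le_zero hquad
  have ha_nonneg : 0 ≤ a := by simpa using hA.posSemidef.dotProduct_mulVec_nonneg z
  have hc_nonneg : 0 ≤ c := by simpa using hA.posSemidef.dotProduct_mulVec_nonneg y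
  have hyy : y ⬝ᵥ y = ‖E y‖ ^ 2 := by
    rw [dot_eq_inner]; exact real_inner_self_eq_norm_sq _
  have hEx0 : E x0 = x := by simp [hE, hx0]
  have hc_le : c ≤ ‖x‖ * ‖E y‖ := by
    have hc_eq : c = x0 ⬝ᵥ y := by
      rw [hc, hy, ← Matrix.vecMul_transpose, ← Matrix.dotProduct_mulVec,
        Matrix.vecMul_transpose, Matrix.mulVec_mulVec, Matrix.mulVec_mulVec, hCT, hCAC]
    calc c = x0 ⬝ᵥ y := hc_eq
      _ ≤ ‖E x0‖ * ‖E y‖ := habs _ _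
      _ = ‖x‖ * ‖E y‖ := by rw [hEx0]
  have ha_le : a ≤ (‖A⁻¹‖ * ‖E y‖) * ‖E y‖ := by
    have haz : a = z ⬝ᵥ y := by rw [ha, hAz]
    have hEz : ‖E z‖ ≤ ‖A⁻¹‖ * ‖E y‖ := Matrix.l2_opNorm_mulVec A⁻¹ (E y)
    calc a = z ⬝ᵥ y := haz
      _ ≤ ‖E z‖ * ‖E y‖ := habs _ _
      _ ≤ (‖A⁻¹‖ * ‖E y‖) * ‖E y‖ := by
          exact mul_le_mul_of_nonneg_right hEz (norm_nonneg _)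
  have hyc : ‖E y‖ ^ 2 * ‖E y‖ ^ 2 ≤ a * c := by nlinarith [hdisc, hyy]
  rcases eq_or_lt_of_le (norm_nonneg (E y)) with h0 | h0
  · rw [← h0]; positivity
  · have hac : a * c ≤ ((‖A⁻¹‖ * ‖E y‖) * ‖E y‖) * (‖x‖ * ‖E y‖) :=
      mul_le_mul ha_le hc_le hc_nonneg (by positivity)
    nlinarith [mul_pos (mul_pos h0 h0) h0]

/-- For `H` an `r×k` real matrix and `A` symmetric positive definite,
`|||(H A Hᵀ)⁺||| ≤ |||H⁺|||² · |||A⁻¹|||`. -/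
theorem specNorm_pinv_conj_le {r k : ℕ} (H : Matrix (Fin r) (Fin k) ℝ)
    (A : Matrix (Fin k) (Fin k) ℝ) (hA : A.PosDef)
    (P : Matrix (Fin r) (Fin r) ℝ) (Hp : Matrix (Fin k) (Fin r) ℝ)
    (hP : IsMoorePenrose (H * A * Hᵀ) P) (hHp : IsMoorePenrose H Hp) :
    specNorm P ≤ specNorm Hp ^ 2 * specNorm A⁻¹ := by
  obtain ⟨h1, h2, h3, h4⟩ := hP
  obtain ⟨g1, g2, g3, g4⟩ := hHp
  have hAT : Aᵀ = A := by
    ext i j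
    rw [Matrix.transpose_apply]
    conv_lhs => rw [← hA.1]
    simp [Matrix.conjTranspose_apply]
  have hMT : (H * A * Hᵀ)ᵀ = H * A * Hᵀ := by
    simp only [Matrix.transpose_mul, Matrix.transpose_transpose, hAT, ← Matrix.mul_assoc]
  have hPT : Pᵀ = P := mp_unique (mp_transpose_of_symm hMT ⟨h1, h2, h3, h4⟩) ⟨h1, h2, h3, h4⟩
  have hPM : P * (H * A * Hᵀ) = (H * A * Hᵀ) * P := by
    calc P * (H * A * Hᵀ) = (P * (H * A * Hᵀ))ᵀ := h4.symm
      _ = (H * A * Hᵀ)ᵀ * Pᵀ := Matrix.transpose_mul _ _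
      _ = (H * A * Hᵀ) * P := by rw [hMT, hPT]
  have hHHpM : H * Hp * (H * A * Hᵀ) = H * A * Hᵀ := by
    simp only [← Matrix.mul_assoc]; rw [g1]
  have hHHpP : H * Hp * P = P := by
    have e : H * Hp * ((H * A * Hᵀ) * P) = (H * A * Hᵀ) * P := by
      rw [← Matrix.mul_assoc, hHHpM]
    calc H * Hp * P = H * Hp * (P * (H * A * Hᵀ) * P) := by rw [h2]
      _ = H * Hp * ((H * A * Hᵀ) * P * P) := by rw [hPM]
      _ = (H * Hp) * ((H * A * Hᵀ) * P) * P := by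
          rw [Matrix.mul_assoc ((H : Matrix (Fin r) (Fin k) ℝ) * Hp) _ P]
      _ = (H * A * Hᵀ) * P * P := by rw [e]
      _ = P * (H * A * Hᵀ) * P := by rw [hPM]
      _ = P := h2
  have hPHHp : P * (H * Hp) = P := by
    calc P * (H * Hp) = Pᵀ * (H * Hp)ᵀ := by rw [hPT, g3]
      _ = ((H * Hp) * P)ᵀ := (Matrix.transpose_mul _ _).symm
      _ = Pᵀ := by rw [hHHpP]
      _ = P := hPT
  have key : P = Hpᵀ * (Hᵀ * P * H) * Hp := by
    calc P = H * Hp * P := hHHpP.symm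
      _ = H * Hp * (P * (H * Hp)) := by rw [hPHHp]
      _ = (H * Hp)ᵀ * (P * (H * Hp)) := by rw [g3]
      _ = (Hpᵀ * Hᵀ) * (P * (H * Hp)) := by rw [Matrix.transpose_mul]
      _ = Hpᵀ * (Hᵀ * P * H) * Hp := by simp only [Matrix.mul_assoc]
  have hCT : (Hᵀ * P * H)ᵀ = Hᵀ * P * H := by
    simp only [Matrix.transpose_mul, Matrix.transpose_transpose, hPT, ← Matrix.mul_assoc]
  have hCAC : (Hᵀ * P * H) * A * (Hᵀ * P * H) = Hᵀ * P * H := by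
    calc (Hᵀ * P * H) * A * (Hᵀ * P * H) = Hᵀ * ((P * (H * A * Hᵀ) * P) * H) := by
          simp only [Matrix.mul_assoc]
      _ = Hᵀ * (P * H) := by rw [h2]
      _ = Hᵀ * P * H := (Matrix.mul_assoc _ _ _).symm
  have hC_le : ‖Hᵀ * P * H‖ ≤ ‖A⁻¹‖ := norm_le_inv_of_CAC hA hCT hCAC
  have hHpT : ‖Hpᵀ‖ = ‖Hp‖ := by
    have : Hpᴴ = Hpᵀ := by ext i j; simp [Matrix.conjTranspose_apply]
    rw [← this]; exact Matrix.l2_opNorm_conjTranspose _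
  show ‖P‖ ≤ ‖Hp‖ ^ 2 * ‖A⁻¹‖
  calc ‖P‖ = ‖Hpᵀ * (Hᵀ * P * H) * Hp‖ := by rw [← key]
    _ ≤ ‖Hpᵀ * (Hᵀ * P * H)‖ * ‖Hp‖ := Matrix.l2_opNorm_mul _ _
    _ ≤ (‖Hpᵀ‖ * ‖Hᵀ * P * H‖) * ‖Hp‖ :=
        mul_le_mul_of_nonneg_right (Matrix.l2_opNorm_mul _ _) (norm_nonneg _)
    _ ≤ (‖Hp‖ * ‖A⁻¹‖) * ‖Hp‖ := by
        refine mul_le_mul_of_nonneg_right ?_ (norm_nonneg _)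
        rw [hHpT]
        exact mul_le_mul_of_nonneg_left hC_le (norm_nonneg _)
    _ = ‖Hp‖ ^ 2 * ‖A⁻¹‖ := by ring
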